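/- Let k ≥ 1, let p < q be odd primes, n = 2^k·p·q, M = 2^{k+1} - 1, a = σ(n) - 2n. If n is weird then M < a < M(M+1). -/

import Mathlib

/-- Sum of the positive divisors of `n`. -/
def sigma' (n : ℕ) : ℕ := ∑ d ∈ n.divisors, d

/-- `n` is abundant if `σ(n) > 2n`. -/
def Abundant (n : ℕ) : Prop := 2 * n < sigma' n

/-- `n` is pseudoperfect (in the weak sense) if some subset of its proper divisors sums to `n`. -/
def Pseudoperfect (n : ℕ) : Prop := ∃ s ⊆ n.properDivisors, ∑ d ∈ s, d = n

/-- `n` is weird if it is abundant and no subset of its proper divisors sums to `n`. -/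
def Weird (n : ℕ) : Prop := Abundant n ∧ ¬ Pseudoperfect n

/-!
Write `M = 2^(k+1) - 1`, so that `σ(n) = M(p+1)(q+1)` and the abundance is `a = M(M+1) - (p-M)(q-M)`.
The divisors `1, 2, …, 2^k` of `n` have subset sums covering every value below `2^(k+1)`, so if
`a ≤ M` one can delete divisors summing to `a` from the proper divisors, which sum to `n + a`.
The same argument applied to `2^k p`, whose abundance `M - p` is small whenever `p ≤ M`, shows that
`2^k p` and hence its multiple `n` are pseudoperfect unless `p > M`; then also `q > M`, so
`(p-M)(q-M) > 0`.
-/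

open Finset ArithmeticFunction
open scoped ArithmeticFunction.sigma

lemma sigma'_eq_sigma_one (n : ℕ) : sigma' n = σ 1 n :=
  (sigma_one_apply n).symm

lemma sigma'_mul_of_coprime {m n : ℕ} (h : m.Coprime n) : sigma' (m * n) = sigma' m * sigma' n := by
  simp only [sigma'_eq_sigma_one, isMultiplicative_sigma.map_mul_of_coprime h]

lemma sigma'_prime {p : ℕ} (hp : p.Prime) : sigma' p = p + 1 := by
  simpa [sigma'_eq_sigma_one, sum_range_succ, add_comm] using sigma_one_apply_prime_pow (i := 1) hp

lemma sigma'_two_pow (k : ℕ) : sigma' (2 ^ k) = 2 ^ (k + 1) - 1 := by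
  simp [sigma'_eq_sigma_one, sigma_one_apply_prime_pow Nat.prime_two, Nat.geomSum_eq le_rfl]

lemma sigma'_two_pow_mul_prime {k p : ℕ} (hp : p.Prime) (hodd : Odd p) :
    sigma' (2 ^ k * p) = (2 ^ (k + 1) - 1) * (p + 1) := by
  rw [sigma'_mul_of_coprime ((Nat.coprime_two_left.2 hodd).pow_left k), sigma'_two_pow,
    sigma'_prime hp]

lemma exists_subset_range_sum_two_pow {a m : ℕ} (ha : a < 2 ^ m) :
    ∃ S ⊆ range m, ∑ i ∈ S, 2 ^ i = a := by
  refine ⟨a.bitIndices.toFinset, fun i hi => ?_, sum_toFinset_bitIndices_two_pow a⟩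
  have := Nat.two_pow_le_of_mem_bitIndices (List.mem_toFinset.1 hi)
  exact mem_range.2 ((Nat.pow_lt_pow_iff_right (by norm_num)).1 (this.trans_lt ha))

lemma pseudoperfect_of_subset_sum_add_two_mul_eq {n : ℕ} {T : Finset ℕ}
    (hT : T ⊆ n.properDivisors) (hsum : ∑ d ∈ T, d + 2 * n = sigma' n) : Pseudoperfect n := by
  refine ⟨n.properDivisors \ T, sdiff_subset, ?_⟩
  have hsplit := sum_sdiff (f := id) hT
  have hproper := Nat.sum_divisors_eq_sum_properDivisors_add_self (n := n)
  simp only [id] at hsplit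
  unfold sigma' at hsum
  omega

lemma pseudoperfect_of_two_pow_dvd {n k : ℕ} (hdvd : 2 ^ k ∣ n) (hlt : 2 ^ k < n)
    (habund : 2 * n ≤ sigma' n) (hsmall : sigma' n < 2 * n + 2 ^ (k + 1)) : Pseudoperfect n := by
  obtain ⟨S, hS, hsum⟩ := exists_subset_range_sum_two_pow (a := sigma' n - 2 * n) (m := k + 1)
    (by omega)
  refine pseudoperfect_of_subset_sum_add_two_mul_eq (T := S.image (2 ^ ·)) ?_ ?_
  · intro d hd
    obtain ⟨i, hi, rfl⟩ := mem_image.1 hd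
    have hik : i ≤ k := Nat.lt_succ_iff.1 (mem_range.1 (hS hi))
    exact Nat.mem_properDivisors.2
      ⟨(pow_dvd_pow 2 hik).trans hdvd, (Nat.pow_le_pow_right (by norm_num) hik).trans_lt hlt⟩
  · rw [sum_image fun _ _ _ _ h => Nat.pow_right_injective le_rfl h, hsum]
    omega

lemma Pseudoperfect.mul_right {m : ℕ} (h : Pseudoperfect m) (q : ℕ) : Pseudoperfect (m * q) := by
  rcases Nat.eq_zero_or_pos q with rfl | hq
  · exact ⟨∅, empty_subset _, by simp⟩
  obtain ⟨s, hs, hsum⟩ := h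
  refine ⟨s.image (· * q), fun d hd => ?_, ?_⟩
  · obtain ⟨e, he, rfl⟩ := mem_image.1 hd
    obtain ⟨hdvd, hlt⟩ := Nat.mem_properDivisors.1 (hs he)
    exact Nat.mem_properDivisors.2 ⟨mul_dvd_mul_right hdvd q, Nat.mul_lt_mul_of_pos_right hlt hq⟩
  · rw [sum_image fun _ _ _ _ h => Nat.eq_of_mul_eq_mul_right hq h, ← sum_mul, hsum]

lemma pseudoperfect_two_pow_mul_prime {k p : ℕ} (hp : p.Prime) (hodd : Odd p)
    (hlt : p < 2 ^ (k + 1)) : Pseudoperfect (2 ^ k * p) := by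
  have hσ := sigma'_two_pow_mul_prime (k := k) hp hodd
  refine pseudoperfect_of_two_pow_dvd (dvd_mul_right _ _)
    (lt_mul_of_one_lt_right (by positivity) hp.one_lt) ?_ ?_ <;>
  · have hpow : 2 ^ (k + 1) = 2 * 2 ^ k := pow_succ' 2 k
    rw [hσ]
    zify [Nat.one_le_two_pow] at hlt hpow ⊢
    nlinarith

theorem weird_abundance_bounds_general (k p q : ℕ) (hp : p.Prime) (hq : q.Prime)
    (hop : Odd p) (hoq : Odd q) (hpq : p < q) (hw : Weird (2 ^ k * p * q)) :
    ((2 : ℤ) ^ (k + 1) - 1) < (sigma' (2 ^ k * p * q) : ℤ) - 2 * (2 ^ k * p * q) ∧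
      (sigma' (2 ^ k * p * q) : ℤ) - 2 * (2 ^ k * p * q) <
        (2 ^ (k + 1) - 1) * ((2 ^ (k + 1) - 1) + 1) := by
  obtain ⟨habund, hnot⟩ := hw
  have hcop : (2 ^ k * p).Coprime q :=
    ((Nat.coprime_two_left.2 hoq).pow_left k).mul_left ((Nat.coprime_primes hp hq).2 hpq.ne)
  have hσ : sigma' (2 ^ k * p * q) = (2 ^ (k + 1) - 1) * (p + 1) * (q + 1) := by
    rw [sigma'_mul_of_coprime hcop, sigma'_two_pow_mul_prime hp hop, sigma'_prime hq]
  have hpM : 2 ^ (k + 1) ≤ p := by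
    by_contra! h
    exact hnot ((pseudoperfect_two_pow_mul_prime hp hop h).mul_right q)
  have haM : 2 * (2 ^ k * p * q) + 2 ^ (k + 1) ≤ sigma' (2 ^ k * p * q) := by
    by_contra! h
    refine hnot (pseudoperfect_of_two_pow_dvd (dvd_mul_of_dvd_left (dvd_mul_right _ _) _) ?_
      habund.le h)
    rw [mul_assoc]
    exact lt_mul_of_one_lt_right (by positivity) (by nlinarith [hp.two_le, hq.two_le])
  rw [hσ] at haM ⊢
  zify [Nat.one_le_two_pow] at haM hpM hpq ⊢
  have hdefect : ((2 : ℤ) ^ (k + 1) - 1) * ((2 ^ (k + 1) - 1) + 1) -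
      (((2 ^ (k + 1) - 1) * (p + 1) * (q + 1)) - 2 * (2 ^ k * p * q)) =
      (p - (2 ^ (k + 1) - 1)) * (q - (2 ^ (k + 1) - 1)) := by ring
  constructor
  · linarith
  · linarith [mul_pos (by linarith : (0 : ℤ) < p - (2 ^ (k + 1) - 1))
      (by linarith : (0 : ℤ) < q - (2 ^ (k + 1) - 1))]

theorem weird_abundance_bounds (k p q : ℕ) (hk : 1 ≤ k) (hp : p.Prime) (hq : q.Prime)
    (hop : Odd p) (hoq : Odd q) (hpq : p < q) (hw : Weird (2 ^ k * p * q)) :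
    ((2 : ℤ) ^ (k + 1) - 1) < (sigma' (2 ^ k * p * q) : ℤ) - 2 * (2 ^ k * p * q) ∧
      (sigma' (2 ^ k * p * q) : ℤ) - 2 * (2 ^ k * p * q) <
        (2 ^ (k + 1) - 1) * ((2 ^ (k + 1) - 1) + 1) :=
  weird_abundance_bounds_general k p q hp hq hop hoq hpq hw
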